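/- Pruning invariance: Let G be a finite directed graph (without circuits) and v a vertex of valence 1, incident to the unique edge e. Then N(G) = N(G \ {v}), where G \ {v} is the induced graph on the remaining vertices. -/

import Mathlib

open scoped BigOperators

/-- The field of rational functions in variables indexed by `V` over `ℚ`. -/
abbrev K (V : Type) : Type := FractionRing (MvPolynomial V ℚ)

/-- The variable `x_v` seen inside the field of rational functions. -/
noncomputable def xv {V : Type} (v : V) : K V :=
  algebraMap (MvPolynomial V ℚ) (K V) (MvPolynomial.X v)

/-- `ψ_w = 1 / ∏ (x_{w_i} - x_{w_{i+1}})` for a word `w`. -/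
noncomputable def psi {V : Type} (w : List V) : K V :=
  (((w.zip w.tail).map fun p => xv p.1 - xv p.2).prod)⁻¹

/-- The word (list of vertices) associated to an enumeration `σ` of the vertex set `W`. -/
def wordOf {V : Type} (W : Finset V) (σ : Fin W.card ≃ W) : List V :=
  (List.finRange W.card).map fun i => ((σ i : W) : V)

/-- `σ` enumerates `W` in an order compatible with all edges of `E`:
the origin of every edge appears before its end. -/
def IsExt {V : Type} (W : Finset V) (E : Finset (V × V)) (σ : Fin W.card ≃ W) : Prop :=
  ∀ e ∈ E, ∃ i j : Fin W.card, i < j ∧ ((σ i : W) : V) = e.1 ∧ ((σ j : W) : V) = e.2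

instance {V : Type} [DecidableEq V] (W : Finset V) (E : Finset (V × V)) (σ : Fin W.card ≃ W) :
    Decidable (IsExt W E σ) := by unfold IsExt; exact inferInstance

/-- `Ψ(G) = Σ_{w ∈ L(G)} ψ_w`, the sum over linear extensions of the graph with
vertex set `W` and edge set `E`. -/
noncomputable def PsiG {V : Type} [DecidableEq V] (W : Finset V) (E : Finset (V × V)) : K V :=
  ∑ σ : Fin W.card ≃ W, if IsExt W E σ then psi (wordOf W σ) else 0

/-- `N(G) = Ψ(G) ⬝ ∏_{(a,b) ∈ E} (x_a - x_b)`. -/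
noncomputable def NG {V : Type} [DecidableEq V] (W : Finset V) (E : Finset (V × V)) : K V :=
  PsiG W E * ∏ e ∈ E, (xv e.1 - xv e.2)

/-- `φ(G)`, the formal sum of the linear extensions of `G` in the free abelian
group on words. -/
noncomputable def phiG {V : Type} [DecidableEq V] (W : Finset V) (E : Finset (V × V)) :
    List V →₀ ℤ :=
  ∑ σ : Fin W.card ≃ W, if IsExt W E σ then Finsupp.single (wordOf W σ) 1 else 0

/-- The graph has no directed circuit. -/
def Acyclic {V : Type} (E : Finset (V × V)) : Prop :=
  ∀ v : V, ¬ Relation.TransGen (fun a b => (a, b) ∈ E) v v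

/-- The underlying undirected simple graph of the directed graph with edge set `E`. -/
def undirected {V : Type} (E : Finset (V × V)) : SimpleGraph V :=
  SimpleGraph.fromRel fun a b => (a, b) ∈ E

/-- The cyclically-consecutive pairs of a list of vertices. -/
def cyclePairs {V : Type} [DecidableEq V] (vs : List V) : Finset (V × V) :=
  Finset.image (fun i : Fin vs.length => (vs.get i, vs.get (finRotate _ i))) Finset.univ

/-- `vs` is (the vertex list of) a cycle of the graph `E`, whose set of forward
edges (edges traversed in their graph orientation) is `HE`. -/
def IsCycle {V : Type} [DecidableEq V] (E : Finset (V × V)) (vs : List V)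
    (HE : Finset (V × V)) : Prop :=
  2 ≤ vs.length ∧ vs.Nodup ∧ HE ⊆ cyclePairs vs ∧ HE ⊆ E ∧
    ∀ p ∈ cyclePairs vs, p ∉ HE → (p.2, p.1) ∈ E

/-!
Since `e = (a, b)` is the only edge at `v`, the claim amounts to
`Ψ(G) = Ψ(G \ {v}) / (x_a - x_b)`. Every linear extension of `G` arises from exactly one linear
extension `u` of `G \ {v}` by inserting `v` into `u` on the correct side of its neighbour
(`List.permutations'Aux v u` lists all insertions of `v` into `u`). Inserting `v` between
consecutive letters `p, q` of `u` turns the factor `1/(x_p - x_q)` of `ψ_u` into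
`1/((x_p - x_v)(x_v - x_q)) = (1/(x_p - x_q)) (1/(x_p - x_v) + 1/(x_v - x_q))`, so the sum over
the insertions after `a` telescopes to `ψ_u/(x_a - x_v)`. The sum over all insertions vanishes,
hence the insertions before `b` contribute `ψ_u/(x_v - x_b)`.
-/

namespace List

variable {α : Type*}

theorem exists_eq_append_cons_of_mem_permutations'Aux {x : α} {l w : List α}
    (h : w ∈ permutations'Aux x l) : ∃ p s, l = p ++ s ∧ w = p ++ x :: s := by
  induction l generalizing w with
  | nil => exact ⟨[], [], rfl, by simpa [permutations'Aux] using h⟩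
  | cons y l ih =>
    simp only [permutations'Aux, mem_cons, mem_map] at h
    rcases h with rfl | ⟨w', hw', rfl⟩
    · exact ⟨[], y :: l, rfl, rfl⟩
    · obtain ⟨p, s, rfl, rfl⟩ := ih hw'
      exact ⟨y :: p, s, rfl, rfl⟩

theorem perm_of_mem_permutations'Aux {x : α} {l w : List α} (h : w ∈ permutations'Aux x l) :
    w ~ x :: l := by
  obtain ⟨p, s, rfl, rfl⟩ := exists_eq_append_cons_of_mem_permutations'Aux h
  exact perm_middle

theorem mem_of_mem_permutations'Aux {x : α} {l w : List α} (h : w ∈ permutations'Aux x l) :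
    x ∈ w :=
  (perm_of_mem_permutations'Aux h).mem_iff.2 mem_cons_self

theorem sublist_iff_of_mem_permutations'Aux [DecidableEq α] {x : α} {l w l₁ : List α}
    (hw : w ∈ permutations'Aux x l) (hx : x ∉ l) (hx₁ : x ∉ l₁) :
    l₁ <+ w ↔ l₁ <+ l := by
  obtain ⟨p, s, rfl, rfl⟩ := exists_eq_append_cons_of_mem_permutations'Aux hw
  refine ⟨fun h => ?_, fun h => h.trans ((sublist_cons_self x s).append_left p)⟩
  have hxp : x ∉ p := fun hp => hx (mem_append_left s hp)
  simpa [erase_of_not_mem hx₁, erase_append_right _ hxp] using h.erase x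

theorem pair_sublist_cons_iff_of_ne {a b c : α} {l : List α} (h : a ≠ c) :
    [a, b] <+ c :: l ↔ [a, b] <+ l := by
  simp [sublist_cons_iff, h]

theorem pair_sublist_cons_self {a b : α} {l : List α} (h : b ∈ l) : [a, b] <+ a :: l :=
  (singleton_sublist.2 h).cons_cons a

theorem Nodup.pair_sublist_iff_not_pair_sublist {a b : α} {l : List α} (hl : l.Nodup)
    (ha : a ∈ l) (hb : b ∈ l) (hab : a ≠ b) : [a, b] <+ l ↔ ¬ [b, a] <+ l := by
  induction l with
  | nil => simp at ha
  | cons c l ih =>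
    obtain ⟨hc, hl⟩ := nodup_cons.1 hl
    by_cases hca : c = a
    · subst hca
      have hbl : b ∈ l := (mem_cons.1 hb).resolve_left (Ne.symm hab)
      simp only [pair_sublist_cons_self hbl, pair_sublist_cons_iff_of_ne (Ne.symm hab), true_iff]
      exact fun h => hc (h.subset (by simp))
    by_cases hcb : c = b
    · subst hcb
      have hal : a ∈ l := (mem_cons.1 ha).resolve_left (Ne.symm hca)
      simp only [pair_sublist_cons_self hal, pair_sublist_cons_iff_of_ne hab, not_true, iff_false]
      exact fun h => hc (h.subset (by simp))
    rw [pair_sublist_cons_iff_of_ne (Ne.symm hca), pair_sublist_cons_iff_of_ne (Ne.symm hcb)]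
    exact ih hl ((mem_cons.1 ha).resolve_left (Ne.symm hca))
      ((mem_cons.1 hb).resolve_left (Ne.symm hcb))

theorem pair_sublist_finRange_iff {n : ℕ} {i j : Fin n} : [i, j] <+ finRange n ↔ i < j := by
  refine ⟨fun h => by simpa using (pairwise_lt_finRange n).sublist h, fun h => ?_⟩
  refine sublist_of_subperm_of_pairwise (Nodup.subperm ?_ ?_) (by simpa using h)
    (pairwise_lt_finRange n)
  · simpa using h.ne
  · simp [subset_def]

end List

theorem inv_sub_mul_inv_sub_add_inv_sub_mul_inv_sub {F : Type*} [Field F] {p q r : F}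
    (hpq : p - q ≠ 0) (hqr : q - r ≠ 0) (hpr : p - r ≠ 0) :
    (p - q)⁻¹ * (q - r)⁻¹ + (p - r)⁻¹ * (r - q)⁻¹ = (p - q)⁻¹ * (p - r)⁻¹ := by
  have hrq : r - q ≠ 0 := by rwa [← neg_sub, neg_ne_zero]
  field_simp
  ring

section Telescoping

open List

variable {V : Type}

@[simp] theorem psi_singleton (z : V) : psi [z] = 1 := by simp [psi]

theorem psi_cons_cons (z y : V) (w : List V) :
    psi (z :: y :: w) = (xv z - xv y)⁻¹ * psi (y :: w) := by
  simp [psi, mul_comm]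

theorem xv_injective : Function.Injective (xv : V → K V) :=
  (IsFractionRing.injective _ _).comp MvPolynomial.X_injective

theorem xv_sub_xv_ne_zero {a b : V} (h : a ≠ b) : xv a - xv b ≠ 0 :=
  sub_ne_zero.2 (xv_injective.ne h)

variable [DecidableEq V]

theorem sum_psi_cons_permutations'Aux_after {v z a : V} {u : List V}
    (hnd : (v :: z :: u).Nodup) (ha : a ∈ z :: u) :
    ((permutations'Aux v u).map fun w => if [a, v] <+ z :: w then psi (z :: w) else 0).sum
      = (xv a - xv v)⁻¹ * psi (z :: u) := by
  induction u generalizing z a with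
  | nil =>
    obtain rfl : a = z := by simpa using ha
    simp [permutations'Aux, psi_cons_cons]
  | cons y u ih =>
    have hvz : v ≠ z := by grind
    have hvy : v ≠ y := by grind
    have hzy : z ≠ y := by grind
    have hav : a ≠ v := by grind
    simp only [permutations'Aux, map_cons, map_map, sum_cons, Function.comp_def]
    by_cases haz : a = z
    · subst haz
      have hall : ∀ w ∈ permutations'Aux v u,
          (if [a, v] <+ a :: y :: w then psi (a :: y :: w) else 0)
            = (xv a - xv y)⁻¹ * if [y, v] <+ y :: w then psi (y :: w) else 0 := by
        intro w hw
        have hvw := mem_of_mem_permutations'Aux hw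
        rw [if_pos (pair_sublist_cons_self (mem_cons_of_mem y hvw)),
          if_pos (pair_sublist_cons_self hvw), psi_cons_cons]
      rw [if_pos (pair_sublist_cons_self mem_cons_self), map_congr_left hall, sum_map_mul_left,
        ih (by grind) mem_cons_self, psi_cons_cons, psi_cons_cons, psi_cons_cons]
      linear_combination psi (y :: u) * inv_sub_mul_inv_sub_add_inv_sub_mul_inv_sub
        (xv_sub_xv_ne_zero hvz.symm) (xv_sub_xv_ne_zero hvy) (xv_sub_xv_ne_zero hzy)
    · have hfirst : ¬ [a, v] <+ z :: v :: y :: u := by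
        rw [pair_sublist_cons_iff_of_ne haz, pair_sublist_cons_iff_of_ne hav]
        exact fun h => (nodup_cons.1 hnd).1 (mem_cons_of_mem z (h.subset (by simp)))
      have hrest : ∀ w ∈ permutations'Aux v u,
          (if [a, v] <+ z :: y :: w then psi (z :: y :: w) else 0)
            = (xv z - xv y)⁻¹ * if [a, v] <+ y :: w then psi (y :: w) else 0 := by
        intro w _
        simp only [pair_sublist_cons_iff_of_ne haz, psi_cons_cons]
        split_ifs <;> simp
      rw [if_neg hfirst, map_congr_left hrest, sum_map_mul_left,
        ih (by grind) ((mem_cons.1 ha).resolve_left haz), psi_cons_cons]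
      ring

theorem sum_psi_permutations'Aux_after {v a : V} {u : List V} (hnd : (v :: u).Nodup)
    (ha : a ∈ u) :
    ((permutations'Aux v u).map fun w => if [a, v] <+ w then psi w else 0).sum
      = (xv a - xv v)⁻¹ * psi u := by
  obtain ⟨y, u, rfl⟩ := exists_cons_of_ne_nil (ne_nil_of_mem ha)
  have hav : a ≠ v := by grind
  have hfirst : ¬ [a, v] <+ v :: y :: u := by
    rw [pair_sublist_cons_iff_of_ne hav]
    exact fun h => (nodup_cons.1 hnd).1 (h.subset (by simp))
  simp only [permutations'Aux, map_cons, map_map, sum_cons, Function.comp_def, if_neg hfirst,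
    zero_add]
  exact sum_psi_cons_permutations'Aux_after hnd ha

theorem sum_psi_permutations'Aux {v : V} {u : List V} (hnd : (v :: u).Nodup) (hu : u ≠ []) :
    ((permutations'Aux v u).map psi).sum = 0 := by
  obtain ⟨y, u, rfl⟩ := exists_cons_of_ne_nil hu
  have hall : ∀ w ∈ permutations'Aux v u,
      psi (y :: w) = if [y, v] <+ y :: w then psi (y :: w) else 0 := fun w hw =>
    (if_pos (pair_sublist_cons_self (mem_of_mem_permutations'Aux hw))).symm
  simp only [permutations'Aux, map_cons, map_map, sum_cons, Function.comp_def]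
  rw [map_congr_left hall, sum_psi_cons_permutations'Aux_after (by grind) mem_cons_self,
    psi_cons_cons, ← add_mul, ← neg_sub, inv_neg, neg_add_cancel, zero_mul]

theorem sum_psi_permutations'Aux_before {v b : V} {u : List V} (hnd : (v :: u).Nodup)
    (hb : b ∈ u) :
    ((permutations'Aux v u).map fun w => if [v, b] <+ w then psi w else 0).sum
      = (xv v - xv b)⁻¹ * psi u := by
  have hvb : v ≠ b := by grind
  have hsplit : ∀ w ∈ permutations'Aux v u,
      psi w = (if [v, b] <+ w then psi w else 0) + if [b, v] <+ w then psi w else 0 := by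
    intro w hw
    have hperm := perm_of_mem_permutations'Aux hw
    have hw' : w.Nodup := hperm.nodup_iff.2 hnd
    simp only [hw'.pair_sublist_iff_not_pair_sublist (mem_of_mem_permutations'Aux hw)
      (hperm.mem_iff.2 (mem_cons_of_mem v hb)) hvb]
    split_ifs <;> simp
  have htotal := sum_psi_permutations'Aux hnd (ne_nil_of_mem hb)
  rw [map_congr_left hsplit, sum_map_add, sum_psi_permutations'Aux_after hnd hb] at htotal
  rw [eq_neg_of_add_eq_zero_left htotal, ← neg_mul, ← inv_neg, neg_sub]

end Telescoping

section LinearExtensions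

open List

variable {V : Type}

theorem wordOf_eq_map (W : Finset V) (σ : Fin W.card ≃ W) :
    wordOf W σ = (finRange W.card).map fun i => ((σ i : W) : V) := rfl

theorem wordOf_injective (W : Finset V) : Function.Injective (wordOf W) := by
  intro σ τ h
  rw [wordOf, wordOf, ← ofFn_eq_map, ← ofFn_eq_map, ofFn_inj] at h
  exact Equiv.ext fun i => Subtype.ext (congrFun h i)

theorem nodup_wordOf (W : Finset V) (σ : Fin W.card ≃ W) : (wordOf W σ).Nodup :=
  (nodup_finRange _).map fun _ _ h => σ.injective (Subtype.ext h)

theorem mem_wordOf (W : Finset V) (σ : Fin W.card ≃ W) {x : V} : x ∈ wordOf W σ ↔ x ∈ W :=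
  ⟨fun h => by obtain ⟨i, -, rfl⟩ := mem_map.1 h; exact (σ i).2,
    fun h => mem_map.2 ⟨σ.symm ⟨x, h⟩, mem_finRange _, by simp⟩⟩

theorem pair_sublist_wordOf_iff (W : Finset V) (σ : Fin W.card ≃ W) {a b : V} :
    [a, b] <+ wordOf W σ ↔ ∃ i j, i < j ∧ ((σ i : W) : V) = a ∧ ((σ j : W) : V) = b := by
  rw [wordOf_eq_map, sublist_map_iff]
  constructor
  · rintro ⟨l, hl, hab⟩
    obtain ⟨i, j, rfl⟩ : ∃ i j, l = [i, j] := by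
      match l, hab with
      | [i, j], _ => exact ⟨i, j, rfl⟩
    simp only [map_cons, map_nil, cons.injEq, and_true] at hab
    exact ⟨i, j, pair_sublist_finRange_iff.1 hl, hab.1.symm, hab.2.symm⟩
  · rintro ⟨i, j, hij, rfl, rfl⟩
    exact ⟨[i, j], pair_sublist_finRange_iff.2 hij, rfl⟩

theorem isExt_iff_pair_sublist (W : Finset V) (E : Finset (V × V)) (σ : Fin W.card ≃ W) :
    IsExt W E σ ↔ ∀ f ∈ E, [f.1, f.2] <+ wordOf W σ := by
  simp only [IsExt, pair_sublist_wordOf_iff]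

variable [DecidableEq V]

theorem image_wordOf {W : Finset V} {l : List V} (hl : l.Nodup) (hW : l.toFinset = W) :
    Finset.univ.image (wordOf W) = l.permutations'.toFinset := by
  have hperms : l.permutations'.Nodup :=
    (permutations_perm_permutations' l).nodup_iff.1 (nodup_permutations l hl)
  refine Finset.eq_of_subset_of_card_le (fun w hw => ?_) ?_
  · obtain ⟨σ, -, rfl⟩ := Finset.mem_image.1 hw
    rw [mem_toFinset, mem_permutations']
    refine perm_of_nodup_nodup_toFinset_eq (nodup_wordOf W σ) hl ?_
    ext x
    rw [mem_toFinset, mem_wordOf, hW]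
  · rw [Finset.card_image_of_injective _ (wordOf_injective W), Finset.card_univ,
      Fintype.card_equiv W.equivFin.symm, toFinset_card_of_nodup hperms,
      ← (permutations_perm_permutations' l).length_eq, length_permutations, Fintype.card_fin,
      ← hW, toFinset_card_of_nodup hl]

theorem sum_wordOf_eq_sum_permutations' {M : Type*} [AddCommMonoid M] {W : Finset V}
    {l : List V} (hl : l.Nodup) (hW : l.toFinset = W) (g : List V → M) :
    ∑ σ : Fin W.card ≃ W, g (wordOf W σ) = (l.permutations'.map g).sum := by
  rw [← Finset.sum_image fun σ _ τ _ h => wordOf_injective W h, image_wordOf hl hW,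
    sum_toFinset _ ((permutations_perm_permutations' l).nodup_iff.1 (nodup_permutations l hl))]

theorem PsiG_eq_sum_permutations' {W : Finset V} (E : Finset (V × V)) {l : List V}
    (hl : l.Nodup) (hW : l.toFinset = W) :
    PsiG W E = (l.permutations'.map fun w =>
      if ∀ f ∈ E, [f.1, f.2] <+ w then psi w else 0).sum := by
  rw [PsiG, ← sum_wordOf_eq_sum_permutations' hl hW]
  simp only [isExt_iff_pair_sublist]

end LinearExtensions

section Pruning

open List

variable {V : Type} [DecidableEq V]

theorem sum_psi_permutations'Aux_pendant {v : V} {e : V × V} {u : List V}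
    (hnd : (v :: u).Nodup) (he : (e.1 = v ∧ e.2 ∈ u) ∨ (e.2 = v ∧ e.1 ∈ u)) :
    ((permutations'Aux v u).map fun w => if [e.1, e.2] <+ w then psi w else 0).sum
      = (xv e.1 - xv e.2)⁻¹ * psi u := by
  obtain ⟨a, b⟩ := e
  rcases he with ⟨rfl, hb⟩ | ⟨rfl, ha⟩
  exacts [sum_psi_permutations'Aux_before hnd hb, sum_psi_permutations'Aux_after hnd ha]

theorem PsiG_insert_pendant {W : Finset V} {E : Finset (V × V)} {v : V} {e : V × V}
    (hv : v ∈ W) (hE : ∀ f ∈ E, f.1 ≠ v ∧ f.2 ≠ v)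
    (he : (e.1 = v ∧ e.2 ∈ W.erase v) ∨ (e.2 = v ∧ e.1 ∈ W.erase v)) :
    PsiG W (insert e E) = (xv e.1 - xv e.2)⁻¹ * PsiG (W.erase v) E := by
  set l := (W.erase v).toList
  have hlW : l.toFinset = W.erase v := Finset.toList_toFinset _
  have hvl : (v :: l).Nodup := nodup_cons.2 ⟨by simp [l], Finset.nodup_toList _⟩
  rw [PsiG_eq_sum_permutations' _ hvl (by simp [hlW, Finset.insert_erase hv]),
    PsiG_eq_sum_permutations' E (nodup_cons.1 hvl).2 hlW, ← sum_map_mul_left]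
  simp only [permutations', flatMap_def, map_flatten, sum_flatten, map_map, Function.comp_def]
  refine congrArg sum (map_congr_left fun u hu => ?_)
  have hlu : u ~ l := mem_permutations'.1 hu
  have hvu : (v :: u).Nodup := (hlu.cons v).nodup_iff.2 hvl
  have hedges : ∀ w ∈ permutations'Aux v u, (∀ f ∈ insert e E, [f.1, f.2] <+ w) ↔
      [e.1, e.2] <+ w ∧ ∀ f ∈ E, [f.1, f.2] <+ u := by
    intro w hw
    refine Finset.forall_mem_insert _ _ _ |>.trans (and_congr_right' (forall₂_congr ?_))
    intro f hf
    have hfv := hE f hf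
    exact sublist_iff_of_mem_permutations'Aux hw (nodup_cons.1 hvu).1
      (by simp [Ne.symm hfv.1, Ne.symm hfv.2])
  by_cases hEu : ∀ f ∈ E, [f.1, f.2] <+ u
  · have he' : (e.1 = v ∧ e.2 ∈ u) ∨ (e.2 = v ∧ e.1 ∈ u) := by
      simpa only [hlu.mem_iff, ← mem_toFinset, hlW] using he
    rw [map_congr_left fun w hw => if_congr ((hedges w hw).trans (and_iff_left hEu)) rfl rfl,
      if_pos hEu]
    exact sum_psi_permutations'Aux_pendant hvu he'
  · rw [map_congr_left fun w hw => if_neg fun h => hEu ((hedges w hw).1 h).2, if_neg hEu]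
    simp

end Pruning

theorem pruning_invariance_general (V : Type) [DecidableEq V]
    (W : Finset V) (E : Finset (V × V)) (hEW : ∀ e ∈ E, e.1 ∈ W ∧ e.2 ∈ W)
    (hacyc : Acyclic E) (v : V) (hv : v ∈ W) (e : V × V) (he : e ∈ E)
    (hval : E.filter (fun f => f.1 = v ∨ f.2 = v) = {e}) :
    NG W E = NG (W.erase v) (E.filter fun f => f.1 ≠ v ∧ f.2 ≠ v) := by
  set E' := E.filter fun f => f.1 ≠ v ∧ f.2 ≠ v
  have hsplit : E = insert e E' := by
    ext f
    have hf := Finset.ext_iff.1 hval f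
    simp only [Finset.mem_filter, Finset.mem_singleton] at hf
    simp only [Finset.mem_insert, Finset.mem_filter, E']
    grind
  have hloop : e.1 ≠ e.2 := fun h =>
    hacyc e.1 (.single (by convert he using 1; exact Prod.ext rfl h))
  have hev : e.1 = v ∨ e.2 = v := by
    have : e ∈ E.filter fun f => f.1 = v ∨ f.2 = v := hval ▸ Finset.mem_singleton_self e
    exact (Finset.mem_filter.1 this).2
  have hpendant : (e.1 = v ∧ e.2 ∈ W.erase v) ∨ (e.2 = v ∧ e.1 ∈ W.erase v) := by
    have := hEW e he
    rcases hev with h | h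
    · exact .inl ⟨h, Finset.mem_erase.2 ⟨h ▸ hloop.symm, this.2⟩⟩
    · exact .inr ⟨h, Finset.mem_erase.2 ⟨h ▸ hloop, this.1⟩⟩
  have heE' : e ∉ E' := fun h => by simp [E'] at h; tauto
  rw [NG, NG, hsplit, Finset.prod_insert heE',
    PsiG_insert_pendant (E := E') hv (fun f hf => (Finset.mem_filter.1 hf).2) hpendant]
  field_simp [xv_sub_xv_ne_zero hloop]

/-- pruning invariance.  If `v` is a vertex of valence 1 of a circuit-free
graph, incident to the unique edge `e`, then `N(G) = N(G \ {v})`. -/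
theorem pruning_invariance (V : Type) [Fintype V] [DecidableEq V]
    (W : Finset V) (E : Finset (V × V)) (hEW : ∀ e ∈ E, e.1 ∈ W ∧ e.2 ∈ W)
    (hacyc : Acyclic E) (v : V) (hv : v ∈ W) (e : V × V) (he : e ∈ E)
    (hval : E.filter (fun f => f.1 = v ∨ f.2 = v) = {e}) :
    NG W E = NG (W.erase v) (E.filter fun f => f.1 ≠ v ∧ f.2 ≠ v) :=
  pruning_invariance_general V W E hEW hacyc v hv e he hval
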